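/- arXiv:1712.04503 — 3 statements merged into one kernel-verified Lean document; each statement's English description precedes it below -/
import Mathlib

section
/- Let A = ⊕_{i<ω} ℤ/p^{n_i}ℤ where (n_i) is a strictly increasing sequence of positive integers with 2·n_i < n_{i+1} for all i. Then for each k ≥ 1, the subgroup of C = ℤ/p^{n_{k+1}}ℤ defined by {x : p^{2n_i} | p^{n_i}·x for all i ≠ k} strictly contains the subgroup defined by {x : p^{2n_i} | p^{n_i}·x for all i}; indeed the former equals p^{n_{k-1}}C and the latter equals p^{n_k}C. -/
/-!
In `ℤ/p^Nℤ` with `a ≤ b ≤ N`, the element `p^a·x` is divisible by `p^b` exactly when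
`p^(b-a)` divides the representative `x.val`. For `N = n (k+1)` the condition at index `i`
therefore says `p^(n i) ∣ x.val` when `i ≤ k` (as `2 n i < n (i+1) ≤ N`) and is vacuous when
`i > k` (as `p^(n i)` kills the group). Since `n` is increasing, the conditions for `i ≠ k`
collapse to the one for `i = k - 1`, and those for all `i` to the one for `i = k`.
-/

namespace ZMod

variable {p N : ℕ}

theorem exists_pow_nsmul_eq_pow_nsmul_iff (hp : p ≠ 0) {a b : ℕ} (hab : a ≤ b) (hbN : b ≤ N)
    (x : ZMod (p ^ N)) : (∃ y : ZMod (p ^ N), p ^ b • y = p ^ a • x) ↔ p ^ (b - a) ∣ x.val := by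
  have : NeZero (p ^ N) := ⟨pow_ne_zero _ hp⟩
  have hb : p ^ b = p ^ a * p ^ (b - a) := by rw [← pow_add, Nat.add_sub_cancel' hab]
  constructor
  · rintro ⟨y, hy⟩
    have hcast : ((p ^ b * y.val : ℕ) : ZMod (p ^ N)) = ((p ^ a * x.val : ℕ) : ZMod (p ^ N)) := by
      simpa [nsmul_eq_mul] using hy
    have hmod : p ^ b * y.val ≡ p ^ a * x.val [MOD p ^ b] :=
      ((ZMod.natCast_eq_natCast_iff _ _ _).mp hcast).of_dvd (pow_dvd_pow p hbN)
    have hdvd : p ^ b ∣ p ^ a * x.val :=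
      Nat.modEq_zero_iff_dvd.mp (hmod.symm.trans (Nat.modEq_zero_iff_dvd.mpr (dvd_mul_right _ _)))
    rw [hb] at hdvd
    exact Nat.dvd_of_mul_dvd_mul_left (pow_pos (Nat.pos_of_ne_zero hp) a) hdvd
  · rintro ⟨t, ht⟩
    refine ⟨t, ?_⟩
    rw [← natCast_zmod_val x, ht, hb]
    simp only [nsmul_eq_mul, Nat.cast_mul, Nat.cast_pow, mul_assoc]

theorem exists_pow_nsmul_eq_pow_nsmul_of_le {a : ℕ} (hNa : N ≤ a) (b : ℕ) (x : ZMod (p ^ N)) :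
    ∃ y : ZMod (p ^ N), p ^ b • y = p ^ a • x :=
  ⟨0, by
    rw [smul_zero, nsmul_eq_mul, (ZMod.natCast_eq_zero_iff _ _).mpr (pow_dvd_pow p hNa), zero_mul]⟩

theorem setOf_exists_eq_pow_nsmul (hp : p ≠ 0) {c : ℕ} (hcN : c ≤ N) :
    {x : ZMod (p ^ N) | ∃ y : ZMod (p ^ N), x = p ^ c • y} = {x | p ^ c ∣ x.val} := by
  ext x
  simpa [eq_comm] using exists_pow_nsmul_eq_pow_nsmul_iff hp (Nat.zero_le c) hcN x

theorem setOf_pow_dvd_val_ssubset (hp : 1 < p) {a b : ℕ} (hab : a < b) (hbN : b ≤ N) :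
    {x : ZMod (p ^ N) | p ^ b ∣ x.val} ⊂ {x | p ^ a ∣ x.val} := by
  refine ⟨fun x hx => (pow_dvd_pow p hab.le).trans hx, fun hsub => ?_⟩
  have hval : ((p ^ a : ℕ) : ZMod (p ^ N)).val = p ^ a :=
    ZMod.val_cast_of_lt (Nat.pow_lt_pow_right hp (hab.trans_le hbN))
  have hdvd := hsub (show p ^ a ∣ ((p ^ a : ℕ) : ZMod (p ^ N)).val by rw [hval])
  rw [Set.mem_ofPred_eq, hval] at hdvd
  exact absurd ((Nat.pow_dvd_pow_iff_le_right hp).mp hdvd) (not_le.mpr hab)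

end ZMod

section

variable {p : ℕ} {n : ℕ → ℕ} {k : ℕ}

theorem exists_pow_two_mul_nsmul_eq_iff_of_le (hp : p ≠ 0) (hmono : Monotone n)
    (hgrow : ∀ i, 2 * n i < n (i + 1)) {i : ℕ} (hik : i ≤ k) (x : ZMod (p ^ n (k + 1))) :
    (∃ y : ZMod (p ^ n (k + 1)), p ^ (2 * n i) • y = p ^ n i • x) ↔ p ^ n i ∣ x.val := by
  have h2 : 2 * n i ≤ n (k + 1) := (hgrow i).le.trans (hmono (Nat.succ_le_succ hik))
  rw [ZMod.exists_pow_nsmul_eq_pow_nsmul_iff hp (by omega) h2, show 2 * n i - n i = n i by omega]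

theorem forall_le_exists_pow_two_mul_nsmul_eq_iff (hp : p ≠ 0) (hmono : Monotone n)
    (hgrow : ∀ i, 2 * n i < n (i + 1)) {j : ℕ} (hjk : j ≤ k) (x : ZMod (p ^ n (k + 1))) :
    (∀ i, i ≤ j ∨ k < i → ∃ y : ZMod (p ^ n (k + 1)), p ^ (2 * n i) • y = p ^ n i • x) ↔
      p ^ n j ∣ x.val := by
  refine ⟨fun h => (exists_pow_two_mul_nsmul_eq_iff_of_le hp hmono hgrow hjk x).mp
    (h j (Or.inl le_rfl)), fun h i hi => ?_⟩
  rcases hi with hij | hki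
  · exact (exists_pow_two_mul_nsmul_eq_iff_of_le hp hmono hgrow (hij.trans hjk) x).mpr
      ((pow_dvd_pow p (hmono hij)).trans h)
  · exact ZMod.exists_pow_nsmul_eq_pow_nsmul_of_le (hmono hki) _ x

theorem setOf_forall_ne_exists_pow_two_mul_nsmul_eq (hp : p ≠ 0) (hmono : Monotone n)
    (hgrow : ∀ i, 2 * n i < n (i + 1)) (hk : 1 ≤ k) :
    {x : ZMod (p ^ n (k + 1)) | ∀ i, i ≠ k →
        ∃ y : ZMod (p ^ n (k + 1)), p ^ (2 * n i) • y = p ^ n i • x} =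
      {x | p ^ n (k - 1) ∣ x.val} := by
  ext x
  rw [Set.mem_ofPred_eq, Set.mem_ofPred_eq,
    ← forall_le_exists_pow_two_mul_nsmul_eq_iff hp hmono hgrow (Nat.sub_le k 1)]
  exact forall_congr' fun i => imp_congr_left (by omega)

theorem setOf_forall_exists_pow_two_mul_nsmul_eq (hp : p ≠ 0) (hmono : Monotone n)
    (hgrow : ∀ i, 2 * n i < n (i + 1)) :
    {x : ZMod (p ^ n (k + 1)) | ∀ i,
        ∃ y : ZMod (p ^ n (k + 1)), p ^ (2 * n i) • y = p ^ n i • x} =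
      {x | p ^ n k ∣ x.val} := by
  ext x
  rw [Set.mem_ofPred_eq, Set.mem_ofPred_eq,
    ← forall_le_exists_pow_two_mul_nsmul_eq_iff hp hmono hgrow le_rfl]
  exact forall_congr' fun i => (imp_iff_right (le_or_gt i k)).symm

end

theorem stmt7_general (p : ℕ) (hp : p.Prime) (n : ℕ → ℕ)
    (hmono : StrictMono n) (hgrow : ∀ i, 2 * n i < n (i + 1)) (k : ℕ) (hk : 1 ≤ k) :
    ({x : ZMod (p ^ n (k + 1)) | ∀ i, i ≠ k →
        ∃ y : ZMod (p ^ n (k + 1)), p ^ (2 * n i) • y = p ^ (n i) • x} =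
      {x : ZMod (p ^ n (k + 1)) | ∃ y : ZMod (p ^ n (k + 1)), x = p ^ n (k - 1) • y}) ∧
    ({x : ZMod (p ^ n (k + 1)) | ∀ i,
        ∃ y : ZMod (p ^ n (k + 1)), p ^ (2 * n i) • y = p ^ (n i) • x} =
      {x : ZMod (p ^ n (k + 1)) | ∃ y : ZMod (p ^ n (k + 1)), x = p ^ n k • y}) ∧
    ({x : ZMod (p ^ n (k + 1)) | ∀ i,
        ∃ y : ZMod (p ^ n (k + 1)), p ^ (2 * n i) • y = p ^ (n i) • x} ⊂
      {x : ZMod (p ^ n (k + 1)) | ∀ i, i ≠ k →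
        ∃ y : ZMod (p ^ n (k + 1)), p ^ (2 * n i) • y = p ^ (n i) • x}) := by
  have hp0 : p ≠ 0 := hp.ne_zero
  have hk_lt : k - 1 < k := by omega
  rw [setOf_forall_ne_exists_pow_two_mul_nsmul_eq hp0 hmono.monotone hgrow hk,
    setOf_forall_exists_pow_two_mul_nsmul_eq hp0 hmono.monotone hgrow,
    ZMod.setOf_exists_eq_pow_nsmul hp0 (hmono.monotone (by omega)),
    ZMod.setOf_exists_eq_pow_nsmul hp0 (hmono.monotone (Nat.le_succ k))]
  exact ⟨rfl, rfl, ZMod.setOf_pow_dvd_val_ssubset hp.one_lt (hmono hk_lt)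
    (hmono.monotone (Nat.le_succ k))⟩

/-- Let `(n i)` be strictly increasing positive integers with `2·n i < n (i+1)` and `k ≥ 1`.
In `C = ℤ/p^{n (k+1)}ℤ`, the subgroup `{x : ∀ i ≠ k, p^{2 n i} ∣ p^{n i}·x}` equals
`p^{n (k-1)}·C` and strictly contains `{x : ∀ i, p^{2 n i} ∣ p^{n i}·x} = p^{n k}·C`. -/
theorem stmt7 (p : ℕ) (hp : p.Prime) (n : ℕ → ℕ) (hpos : ∀ i, 0 < n i)
    (hmono : StrictMono n) (hgrow : ∀ i, 2 * n i < n (i + 1)) (k : ℕ) (hk : 1 ≤ k) :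
    ({x : ZMod (p ^ n (k + 1)) | ∀ i, i ≠ k →
        ∃ y : ZMod (p ^ n (k + 1)), p ^ (2 * n i) • y = p ^ (n i) • x} =
      {x : ZMod (p ^ n (k + 1)) | ∃ y : ZMod (p ^ n (k + 1)), x = p ^ n (k - 1) • y}) ∧
    ({x : ZMod (p ^ n (k + 1)) | ∀ i,
        ∃ y : ZMod (p ^ n (k + 1)), p ^ (2 * n i) • y = p ^ (n i) • x} =
      {x : ZMod (p ^ n (k + 1)) | ∃ y : ZMod (p ^ n (k + 1)), x = p ^ n k • y}) ∧
    ({x : ZMod (p ^ n (k + 1)) | ∀ i,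
        ∃ y : ZMod (p ^ n (k + 1)), p ^ (2 * n i) • y = p ^ (n i) • x} ⊂
      {x : ZMod (p ^ n (k + 1)) | ∀ i, i ≠ k →
        ∃ y : ZMod (p ^ n (k + 1)), p ^ (2 * n i) • y = p ^ (n i) • x}) :=
  stmt7_general p hp n hmono hgrow k hk
end

section
/- Let A be an abelian group and H₀, …, H_{n-1} subgroups of A, and let β < n. Suppose for each i < ω there is an element a_i that lies in a fixed coset c_α + H_α for every α ≠ β and such that the cosets a_i + H_β are pairwise distinct. Then the cosets (a_i − a_0) + (∩_{α<n} H_α) are pairwise distinct elements of the quotient (∩_{α≠β} H_α)/(∩_{α<n} H_α), and hence the index [∩_{α≠β} H_α : ∩_{α<n} H_α] is at least ω (infinite). -/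
namespace AddSubgroup

variable {A : Type*} [AddCommGroup A]

theorem sub_mem_biInf_of_sub_mem {ι : Type*} {H : ι → AddSubgroup A} {S : Set ι}
    {c : ι → A} {x y : A} (hx : ∀ α ∈ S, x - c α ∈ H α) (hy : ∀ α ∈ S, y - c α ∈ H α) :
    x - y ∈ ⨅ α ∈ S, H α := by
  simp only [mem_iInf]
  intro α hα
  simpa using sub_mem (hx α hα) (hy α hα)

theorem index_addSubgroupOf_eq_zero_of_pairwise_sub_notMem {ι : Type*} [Infinite ι]
    {K L : AddSubgroup A} (x : ι → A) (hK : ∀ i, x i ∈ K)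
    (hL : Pairwise fun i j => x i - x j ∉ L) : (L.addSubgroupOf K).index = 0 := by
  refine index_eq_zero_iff_infinite.mpr <| Infinite.of_injective
    (fun i => (QuotientAddGroup.mk (⟨x i, hK i⟩ : K) : K ⧸ L.addSubgroupOf K)) fun i j hij => ?_
  by_contra hne
  rw [QuotientAddGroup.eq, mem_addSubgroupOf] at hij
  exact hL (Ne.symm hne) (by simpa [neg_add_eq_sub] using hij)

end AddSubgroup

/-- If each `a i` lies in a fixed coset `c α + H α` for every `α ≠ β` while the cosets
`a i + H β` are pairwise distinct, then the cosets `(a i - a 0) + ⋂ H α` are pairwise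
distinct in `(⋂_{α ≠ β} H α)/(⋂ H α)`, so the index `[⋂_{α ≠ β} H α : ⋂ H α]` is infinite. -/
theorem stmt12 (A : Type*) [AddCommGroup A] (n : ℕ) (H : Fin n → AddSubgroup A) (β : Fin n)
    (c : Fin n → A) (a : ℕ → A)
    (hcoset : ∀ (i : ℕ) (α : Fin n), α ≠ β → a i - c α ∈ H α)
    (hdist : ∀ i j : ℕ, i ≠ j → a i - a j ∉ H β) :
    (∀ i j : ℕ, i ≠ j → (a i - a 0) - (a j - a 0) ∉ ⨅ α, H α) ∧
    ((⨅ α, H α).addSubgroupOf (⨅ α ∈ ({β}ᶜ : Set (Fin n)), H α)).index = 0 := by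
  have hdist_inf : ∀ i j : ℕ, i ≠ j → (a i - a 0) - (a j - a 0) ∉ ⨅ α, H α := fun i j hij h =>
    hdist i j hij (iInf_le H β (by simpa using h))
  refine ⟨hdist_inf, AddSubgroup.index_addSubgroupOf_eq_zero_of_pairwise_sub_notMem
    (fun i => a i - a 0) (fun i => AddSubgroup.sub_mem_biInf_of_sub_mem (hcoset i) (hcoset 0))
    hdist_inf⟩
end

section
/- If L and L' are join-semilattices with breadth d and d' respectively, then the product semilattice L × L' has breadth at most d + d'. (Breadth of a join-semilattice L is the least integer d such that for all x₁,…,x_n ∈ L with n > d there are d indices i₁ < … < i_d with x₁ ∧ … ∧ x_n = x_{i₁} ∧ … ∧ x_{i_d}, meets taken where they exist.) -/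
/-! The meet of the first coordinates is attained on at most `d` indices and that of the second
coordinates on at most `d'`. The union of the two index sets attains both, because any index set
lying between an attaining set and the whole family attains the meet too. -/

/-- A meet-semilattice has breadth at most `d` if the meet of any `n > d` elements equals
the meet of some (at most) `d` of them. -/
def HasBreadthLE (L : Type*) [SemilatticeInf L] (d : ℕ) : Prop :=
  ∀ (n : ℕ) (x : Fin n → L) (h : d < n),
    ∃ (t : Finset (Fin n)) (ht : t.Nonempty), t.card ≤ d ∧
      Finset.univ.inf'
        (Finset.univ_nonempty_iff.mpr ⟨⟨0, Nat.lt_of_le_of_lt (Nat.zero_le d) h⟩⟩) x =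
        t.inf' ht x

namespace Finset

variable {α β : Type*}

lemma inf'_eq_inf'_of_subset_of_subset [SemilatticeInf α] {s v u : Finset β} {f : β → α}
    (hs : s.Nonempty) (hv : v.Nonempty) (hu : u.Nonempty) (hsv : s ⊆ v) (hvu : v ⊆ u)
    (h : u.inf' hu f = s.inf' hs f) : u.inf' hu f = v.inf' hv f :=
  le_antisymm (inf'_mono f hvu hv) (h ▸ inf'_mono f hsv hs)

variable {γ : Type*} [SemilatticeInf α] [SemilatticeInf γ]

lemma fst_inf' (s : Finset β) (hs : s.Nonempty) (f : β → α × γ) :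
    (s.inf' hs f).1 = s.inf' hs (fun i => (f i).1) :=
  map_finset_inf' (⟨Prod.fst, fun _ _ => rfl⟩ : InfHom (α × γ) α) hs f

lemma snd_inf' (s : Finset β) (hs : s.Nonempty) (f : β → α × γ) :
    (s.inf' hs f).2 = s.inf' hs (fun i => (f i).2) :=
  map_finset_inf' (⟨Prod.snd, fun _ _ => rfl⟩ : InfHom (α × γ) γ) hs f

end Finset

/-- If `L` has breadth at most `d` and `L'` has breadth at most `d'`, then the product
semilattice `L × L'` has breadth at most `d + d'`. -/
theorem stmt15 (L L' : Type*) [SemilatticeInf L] [SemilatticeInf L'] (d d' : ℕ)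
    (h : HasBreadthLE L d) (h' : HasBreadthLE L' d') :
    HasBreadthLE (L × L') (d + d') := by
  intro n x hn
  obtain ⟨t, ht, hcard, heq⟩ := h n (fun i => (x i).1) (by omega)
  obtain ⟨t', ht', hcard', heq'⟩ := h' n (fun i => (x i).2) (by omega)
  have hunion : (t ∪ t').Nonempty := ht.mono Finset.subset_union_left
  refine ⟨t ∪ t', hunion, (Finset.card_union_le t t').trans (by omega), Prod.ext ?_ ?_⟩
  · simp only [Finset.fst_inf']
    exact Finset.inf'_eq_inf'_of_subset_of_subset ht hunion _ Finset.subset_union_left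
      (Finset.subset_univ _) heq
  · simp only [Finset.snd_inf']
    exact Finset.inf'_eq_inf'_of_subset_of_subset ht' hunion _ Finset.subset_union_right
      (Finset.subset_univ _) heq'
end
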